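/- arXiv:math-ph/0406008 — 2 statements merged into one kernel-verified Lean document; each statement's English description precedes it below -/
import Mathlib

section
/- Let m > 0, V : ℝⁿ → ℝ be C¹, S₁ continuous, and let S be a C¹ solution of ∂S/∂t + (1/(2m))‖∇S‖² + V = 0 on [t₀,t₁]×ℝⁿ with S(t₁,·) = S₁. If x* is a C¹ path with x*(t₀) = x₀ and ẋ*(t) = (1/m)∇S(t,x*(t)) for all t, then for every C¹ path x with x(t₀) = x₀ one has ∫_{t₀}^{t₁} L(x*(t),ẋ*(t)) dt − S₁(x*(t₁)) ≤ ∫_{t₀}^{t₁} L(x(t),ẋ(t)) dt − S₁(x(t₁)), where L(x,v) = (m/2)‖v‖² − V(x). -/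
/-!
Along any C¹ path `x`, the Hamilton–Jacobi equation and completing the square give
`d/dt S(t, x t) = L(x, ẋ) - (m/2)‖ẋ - m⁻¹ ∇S(t, x)‖²`. Integrating, the action of every path is
at least `-S(t₀, x₀)`, with equality along the characteristic `xs`, where the square vanishes.
-/

open Matrix

/-- Spatial gradient of a function on `ℝⁿ`. -/
noncomputable def grad {n : ℕ} (f : (Fin n → ℝ) → ℝ) (x : Fin n → ℝ) : Fin n → ℝ :=
  fun i => fderiv ℝ f x (Pi.single i 1)

open Set

theorem grad_dotProduct {n : ℕ} (f : (Fin n → ℝ) → ℝ) (y w : Fin n → ℝ) :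
    grad f y ⬝ᵥ w = fderiv ℝ f y w := by
  conv_rhs => rw [← Finset.univ_sum_single w]
  simp only [map_sum, dotProduct, grad]
  refine Finset.sum_congr rfl fun i _ => ?_
  rw [show Pi.single i (w i) = w i • Pi.single i (1 : ℝ) by simp [← Pi.single_smul],
    map_smul, smul_eq_mul, mul_comm]

theorem dotProduct_complete_square {ι : Type*} [Fintype ι] {m : ℝ} (hm : m ≠ 0)
    (p v : ι → ℝ) :
    p ⬝ᵥ v - 1 / (2 * m) * (p ⬝ᵥ p)
      = m / 2 * (v ⬝ᵥ v) - m / 2 * ((v - m⁻¹ • p) ⬝ᵥ (v - m⁻¹ • p)) := by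
  simp only [sub_dotProduct, dotProduct_sub, smul_dotProduct, dotProduct_smul, smul_eq_mul,
    dotProduct_comm v p]
  field_simp
  ring

theorem hasDerivAt_comp_path {E : Type*} [NormedAddCommGroup E] [NormedSpace ℝ E]
    {S : ℝ → E → ℝ} {x : ℝ → E} {t : ℝ} {v : E}
    (hS : DifferentiableAt ℝ (fun p : ℝ × E => S p.1 p.2) (t, x t)) (hx : HasDerivAt x v t) :
    HasDerivAt (fun τ => S τ (x τ)) (deriv (fun τ => S τ (x t)) t + fderiv ℝ (S t) (x t) v) t := by
  set D := fderiv ℝ (fun p : ℝ × E => S p.1 p.2) (t, x t)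
  have hF : HasFDerivAt (fun p : ℝ × E => S p.1 p.2) D (t, x t) := hS.hasFDerivAt
  have h_time : HasDerivAt (fun τ => S τ (x t)) (D (1, 0)) t :=
    (hF.comp_hasDerivAt t ((hasDerivAt_id' t).prodMk (hasDerivAt_const t (x t))) :)
  have h_space : fderiv ℝ (S t) (x t) = D.comp (ContinuousLinearMap.inr ℝ ℝ E) :=
    (hF.comp (x t) ((hasFDerivAt_const t (x t)).prodMk (hasFDerivAt_id (x t)))).fderiv
  have h_split : D (1, v) = D (1, 0) + D (0, v) := by
    rw [← map_add, Prod.mk_add_mk, add_zero, zero_add]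
  rw [h_time.deriv, h_space, ContinuousLinearMap.comp_apply, ContinuousLinearMap.inr_apply,
    ← h_split]
  exact (hF.comp_hasDerivAt t ((hasDerivAt_id' t).prodMk hx) :)

noncomputable def lagrangian {n : ℕ} (m : ℝ) (V : (Fin n → ℝ) → ℝ) (x v : Fin n → ℝ) : ℝ :=
  m / 2 * (v ⬝ᵥ v) - V x

theorem ContDiff.continuous_lagrangian {n : ℕ} {m : ℝ} {V : (Fin n → ℝ) → ℝ} (hV : Continuous V)
    {x : ℝ → Fin n → ℝ} (hx : ContDiff ℝ 1 x) :
    Continuous fun t => lagrangian m V (x t) (deriv x t) := by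
  have hx' := hx.continuous_deriv le_rfl
  exact continuous_const.mul (hx'.dotProduct hx') |>.sub (hV.comp hx.continuous)

section HamiltonJacobi

variable {n : ℕ} {m : ℝ} {V : (Fin n → ℝ) → ℝ} {S : ℝ → (Fin n → ℝ) → ℝ}

theorem hasDerivAt_comp_path_of_hamiltonJacobi (hm : m ≠ 0)
    (hS : ContDiff ℝ 1 (fun p : ℝ × (Fin n → ℝ) => S p.1 p.2)) {t : ℝ}
    (hHJ : ∀ y : Fin n → ℝ,
      deriv (fun τ => S τ y) t + (1 / (2 * m)) * (grad (S t) y ⬝ᵥ grad (S t) y) + V y = 0)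
    {x : ℝ → Fin n → ℝ} (hx : ContDiff ℝ 1 x) :
    HasDerivAt (fun τ => S τ (x τ))
      (lagrangian m V (x t) (deriv x t) - m / 2 *
        ((deriv x t - m⁻¹ • grad (S t) (x t)) ⬝ᵥ (deriv x t - m⁻¹ • grad (S t) (x t)))) t := by
  have h := hasDerivAt_comp_path ((hS.differentiable one_ne_zero).differentiableAt)
    ((hx.differentiable one_ne_zero t).hasDerivAt)
  convert h using 1
  rw [← grad_dotProduct, lagrangian]
  linarith [hHJ (x t), dotProduct_complete_square hm (grad (S t) (x t)) (deriv x t)]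

theorem sub_le_integral_lagrangian {t₀ t₁ : ℝ} (ht : t₀ ≤ t₁) (hm : 0 < m) (hV : Continuous V)
    (hS : ContDiff ℝ 1 (fun p : ℝ × (Fin n → ℝ) => S p.1 p.2))
    (hHJ : ∀ t ∈ Icc t₀ t₁, ∀ y : Fin n → ℝ,
      deriv (fun τ => S τ y) t + (1 / (2 * m)) * (grad (S t) y ⬝ᵥ grad (S t) y) + V y = 0)
    {x : ℝ → Fin n → ℝ} (hx : ContDiff ℝ 1 x) :
    S t₁ (x t₁) - S t₀ (x t₀) ≤ ∫ t in t₀..t₁, lagrangian m V (x t) (deriv x t) := by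
  have hderiv t (htI : t ∈ Icc t₀ t₁) :=
    hasDerivAt_comp_path_of_hamiltonJacobi hm.ne' hS (hHJ t htI) hx
  refine intervalIntegral.sub_le_integral_of_hasDeriv_right_of_le ht
    (HasDerivAt.continuousOn hderiv)
    (fun t htI => (hderiv t (Ioo_subset_Icc_self htI)).hasDerivWithinAt)
    ((hx.continuous_lagrangian hV).integrableOn_Icc) fun t _ => ?_
  have h_sq : 0 ≤ (deriv x t - m⁻¹ • grad (S t) (x t)) ⬝ᵥ (deriv x t - m⁻¹ • grad (S t) (x t)) :=
    Finset.sum_nonneg fun i _ => mul_self_nonneg _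
  nlinarith [mul_nonneg hm.le h_sq]

theorem integral_lagrangian_eq_of_flow {t₀ t₁ : ℝ} (ht : t₀ ≤ t₁) (hm : m ≠ 0) (hV : Continuous V)
    (hS : ContDiff ℝ 1 (fun p : ℝ × (Fin n → ℝ) => S p.1 p.2))
    (hHJ : ∀ t ∈ Icc t₀ t₁, ∀ y : Fin n → ℝ,
      deriv (fun τ => S τ y) t + (1 / (2 * m)) * (grad (S t) y ⬝ᵥ grad (S t) y) + V y = 0)
    {x : ℝ → Fin n → ℝ} (hx : ContDiff ℝ 1 x)
    (hflow : ∀ t ∈ Icc t₀ t₁, deriv x t = m⁻¹ • grad (S t) (x t)) :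
    ∫ t in t₀..t₁, lagrangian m V (x t) (deriv x t) = S t₁ (x t₁) - S t₀ (x t₀) := by
  refine intervalIntegral.integral_eq_sub_of_hasDerivAt (f := fun τ => S τ (x τ))
    (fun t htI => ?_)
    ((hx.continuous_lagrangian hV).intervalIntegrable _ _)
  rw [uIcc_of_le ht] at htI
  simpa [hflow t htI] using hasDerivAt_comp_path_of_hamiltonJacobi hm hS (hHJ t htI) hx

end HamiltonJacobi

theorem stmt_12_general {n : ℕ} (t₀ t₁ : ℝ) (ht : t₀ ≤ t₁) (m : ℝ) (hm : 0 < m)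
    (V : (Fin n → ℝ) → ℝ) (hV : ContDiff ℝ 1 V)
    (S₁ : (Fin n → ℝ) → ℝ)
    (S : ℝ → (Fin n → ℝ) → ℝ)
    (hS : ContDiff ℝ 1 (fun p : ℝ × (Fin n → ℝ) => S p.1 p.2))
    (hHJ : ∀ t ∈ Set.Icc t₀ t₁, ∀ y : Fin n → ℝ,
      deriv (fun τ => S τ y) t
        + (1 / (2 * m)) * (grad (S t) y ⬝ᵥ grad (S t) y) + V y = 0)
    (hterm : ∀ y : Fin n → ℝ, S t₁ y = S₁ y)
    (x₀ : Fin n → ℝ)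
    (xs : ℝ → Fin n → ℝ) (hxs : ContDiff ℝ 1 xs) (hxs0 : xs t₀ = x₀)
    (hflow : ∀ t ∈ Set.Icc t₀ t₁, deriv xs t = m⁻¹ • grad (S t) (xs t)) :
    ∀ x : ℝ → Fin n → ℝ, ContDiff ℝ 1 x → x t₀ = x₀ →
      (∫ t in t₀..t₁, ((m / 2) * (deriv xs t ⬝ᵥ deriv xs t) - V (xs t)))
          - S₁ (xs t₁)
        ≤ (∫ t in t₀..t₁, ((m / 2) * (deriv x t ⬝ᵥ deriv x t) - V (x t)))
          - S₁ (x t₁) := by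
  intro x hx hx0
  have h_opt := integral_lagrangian_eq_of_flow ht hm.ne' hV.continuous hS hHJ hxs hflow
  have h_ge := sub_le_integral_lagrangian ht hm hV.continuous hS hHJ hx
  simp only [lagrangian, hterm, hxs0, hx0] at h_opt h_ge
  linarith

theorem stmt_12 {n : ℕ} (t₀ t₁ : ℝ) (ht : t₀ ≤ t₁) (m : ℝ) (hm : 0 < m)
    (V : (Fin n → ℝ) → ℝ) (hV : ContDiff ℝ 1 V)
    (S₁ : (Fin n → ℝ) → ℝ) (hS₁ : Continuous S₁)
    (S : ℝ → (Fin n → ℝ) → ℝ)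
    (hS : ContDiff ℝ 1 (fun p : ℝ × (Fin n → ℝ) => S p.1 p.2))
    (hHJ : ∀ t ∈ Set.Icc t₀ t₁, ∀ y : Fin n → ℝ,
      deriv (fun τ => S τ y) t
        + (1 / (2 * m)) * (grad (S t) y ⬝ᵥ grad (S t) y) + V y = 0)
    (hterm : ∀ y : Fin n → ℝ, S t₁ y = S₁ y)
    (x₀ : Fin n → ℝ)
    (xs : ℝ → Fin n → ℝ) (hxs : ContDiff ℝ 1 xs) (hxs0 : xs t₀ = x₀)
    (hflow : ∀ t ∈ Set.Icc t₀ t₁, deriv xs t = m⁻¹ • grad (S t) (xs t)) :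
    ∀ x : ℝ → Fin n → ℝ, ContDiff ℝ 1 x → x t₀ = x₀ →
      (∫ t in t₀..t₁, ((m / 2) * (deriv xs t ⬝ᵥ deriv xs t) - V (xs t)))
          - S₁ (xs t₁)
        ≤ (∫ t in t₀..t₁, ((m / 2) * (deriv x t ⬝ᵥ deriv x t) - V (x t)))
          - S₁ (x t₁) :=
  stmt_12_general t₀ t₁ ht m hm V hV S₁ S hS hHJ hterm x₀ xs hxs hxs0 hflow
end

section
/- Let m > 0, V : ℝⁿ → ℝ be C¹, S₁ continuous, Ω : ℝⁿ → ℝ^{k×n} continuous with full row rank everywhere, σ(x) = I − Ωᵀ(x)(Ω(x)Ωᵀ(x))⁻¹Ω(x), and let S be a C¹ solution of ∂S/∂t + (1/(2m))∇S·σ∇S + V = 0 on [t₀,t₁]×ℝⁿ with S(t₁,·) = S₁. If x* is C¹ with x*(t₀) = x₀ and ẋ*(t) = (1/m)σ(x*(t))∇S(t,x*(t)), then x* minimizes the action I(x) = ∫_{t₀}^{t₁}[(m/2)‖ẋ‖² − V(x)] dt − S₁(x(t₁)) over all C¹ paths x with x(t₀) = x₀ and Ω(x(t))ẋ(t) = 0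 for all t. -/
/-!
Carathéodory's "royal road". Along any C¹ path `z` with `σ(z) ż = ż`, the chain rule and the
generalized Hamilton–Jacobi equation give, after completing the square (using that `σ` is a
symmetric idempotent),
`L(z, ż) - d/dt S(t, z(t)) = (m/2) ‖ż - m⁻¹ σ(z) ∇S(t, z)‖²`.
Integrating, the action of `z` equals `∫ (m/2) ‖ż - m⁻¹ σ ∇S‖² - S(t₀, x₀)`. The integral is
nonnegative, and it vanishes for `x*` by the flow equation; admissible paths satisfy `σ(x) ẋ = ẋ`
because `σ(x)` fixes `ker Ω(x)`.
-/

open Matrix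

namespace Matrix

section KerProj

variable {ι κ R : Type*} [Fintype ι] [Fintype κ] [DecidableEq ι] [DecidableEq κ] [CommRing R]

/-- For `A` of full row rank, the orthogonal projection onto `ker A`. -/
noncomputable def kerProj (A : Matrix κ ι R) : Matrix ι ι R :=
  1 - Aᵀ * (A * Aᵀ)⁻¹ * A

lemma isSymm_kerProj (A : Matrix κ ι R) : (kerProj A).IsSymm := by
  simp [kerProj, IsSymm, transpose_nonsing_inv, Matrix.mul_assoc]

lemma isIdempotentElem_kerProj {A : Matrix κ ι R} (hA : IsUnit (A * Aᵀ)) :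
    IsIdempotentElem (kerProj A) := by
  have hdet : IsUnit (A * Aᵀ).det := (isUnit_iff_isUnit_det _).mp hA
  have hP : Aᵀ * (A * Aᵀ)⁻¹ * A * (Aᵀ * (A * Aᵀ)⁻¹ * A) = Aᵀ * (A * Aᵀ)⁻¹ * A := by
    calc _ = Aᵀ * ((A * Aᵀ)⁻¹ * ((A * Aᵀ) * ((A * Aᵀ)⁻¹ * A))) := by simp only [Matrix.mul_assoc]
      _ = _ := by rw [nonsing_inv_mul_cancel_left _ _ hdet, Matrix.mul_assoc]
  rw [IsIdempotentElem, kerProj, Matrix.sub_mul, Matrix.mul_sub, Matrix.mul_sub, hP]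
  simp only [Matrix.one_mul, Matrix.mul_one]
  abel

lemma kerProj_mulVec_of_mulVec_eq_zero (A : Matrix κ ι R) {v : ι → R} (hv : A *ᵥ v = 0) :
    kerProj A *ᵥ v = v := by
  rw [kerProj, sub_mulVec, one_mulVec, ← mulVec_mulVec, hv, mulVec_zero, sub_zero]

end KerProj

lemma isUnit_mul_transpose_self {ι κ : Type*} [Fintype ι] [Fintype κ] [DecidableEq κ]
    {A : Matrix κ ι ℝ} (hA : LinearIndependent ℝ fun i => A i) : IsUnit (A * Aᵀ) := by
  simpa using (PosDef.mul_conjTranspose_self A (vecMul_injective_iff.mpr hA)).isUnit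

section SymmIdempotent

variable {ι : Type*} [Fintype ι]

lemma IsSymm.dotProduct_mulVec_comm {R : Type*} [CommSemiring R] {P : Matrix ι ι R}
    (hP : P.IsSymm) (u v : ι → R) :
    u ⬝ᵥ P *ᵥ v = P *ᵥ u ⬝ᵥ v := by
  rw [dotProduct_mulVec, ← hP.eq, vecMul_transpose, hP.eq]

lemma IsSymm.complete_square {K : Type*} [Field K] [CharZero K] {P : Matrix ι ι K} (hP : P.IsSymm)
    (hPP : IsIdempotentElem P) {m : K} (hm : m ≠ 0) (g : ι → K) {v : ι → K}
    (hv : P *ᵥ v = v) :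
    m / 2 * (v ⬝ᵥ v) - g ⬝ᵥ v + 1 / (2 * m) * (g ⬝ᵥ P *ᵥ g)
      = m / 2 * ((v - m⁻¹ • P *ᵥ g) ⬝ᵥ (v - m⁻¹ • P *ᵥ g)) := by
  have hgv : g ⬝ᵥ v = P *ᵥ g ⬝ᵥ v := by rw [← hP.dotProduct_mulVec_comm, hv]
  have hgg : g ⬝ᵥ P *ᵥ g = P *ᵥ g ⬝ᵥ P *ᵥ g := by
    rw [← hP.dotProduct_mulVec_comm, mulVec_mulVec, hPP.eq]
  simp only [hgv, hgg, sub_dotProduct, dotProduct_sub, smul_dotProduct, dotProduct_smul,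
    smul_eq_mul, dotProduct_comm v]
  field_simp
  ring

end SymmIdempotent

end Matrix

lemma fderiv_apply_eq_grad_dotProduct {n : ℕ} (f : (Fin n → ℝ) → ℝ) (y v : Fin n → ℝ) :
    fderiv ℝ f y v = grad f y ⬝ᵥ v := by
  conv_lhs => rw [pi_eq_sum_univ' v]
  simp [dotProduct, grad, mul_comm]

lemma hasDerivAt_comp_curve {n : ℕ} {S : ℝ → (Fin n → ℝ) → ℝ} {z : ℝ → Fin n → ℝ} {t : ℝ}
    (hS : DifferentiableAt ℝ (fun p : ℝ × (Fin n → ℝ) => S p.1 p.2) (t, z t))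
    (hz : DifferentiableAt ℝ z t) :
    HasDerivAt (fun τ => S τ (z τ))
      (deriv (fun τ => S τ (z t)) t + grad (S t) (z t) ⬝ᵥ deriv z t) t := by
  set D := fderiv ℝ (fun p : ℝ × (Fin n → ℝ) => S p.1 p.2) (t, z t)
  have hD : HasFDerivAt (fun p : ℝ × (Fin n → ℝ) => S p.1 p.2) D (t, z t) := hS.hasFDerivAt
  have htime : D (1, 0) = deriv (fun τ => S τ (z t)) t :=
    (hD.comp_hasDerivAt t ((hasDerivAt_id t).prodMk (hasDerivAt_const t (z t)))).deriv.symm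
  have hslice : HasFDerivAt (S t) (D.comp (.inr ℝ ℝ _)) (z t) :=
    hD.comp (z t) (hasFDerivAt_prodMk_right t (z t))
  have hspace : D (0, deriv z t) = grad (S t) (z t) ⬝ᵥ deriv z t := by
    rw [← fderiv_apply_eq_grad_dotProduct, hslice.fderiv]
    rfl
  have hsplit : ((1 : ℝ), deriv z t) = (1, 0) + (0, deriv z t) := by simp
  have := hD.comp_hasDerivAt t ((hasDerivAt_id t).prodMk hz.hasDerivAt)
  rwa [hsplit, map_add, htime, hspace] at this

section HamiltonJacobi

variable {n : ℕ} {t₀ t₁ m : ℝ} {V : (Fin n → ℝ) → ℝ}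
  {σ : (Fin n → ℝ) → Matrix (Fin n) (Fin n) ℝ} {S : ℝ → (Fin n → ℝ) → ℝ}

theorem action_sub_eq_integral_sq_sub
    (ht : t₀ ≤ t₁) (hm : m ≠ 0) (hV : Continuous V)
    (hσsymm : ∀ y, (σ y).IsSymm) (hσidem : ∀ y, IsIdempotentElem (σ y))
    (hS : ContDiff ℝ 1 (fun p : ℝ × (Fin n → ℝ) => S p.1 p.2))
    (hGHJ : ∀ t ∈ Set.Icc t₀ t₁, ∀ y : Fin n → ℝ,
      deriv (fun τ => S τ y) t
        + (1 / (2 * m)) * (grad (S t) y ⬝ᵥ (σ y).mulVec (grad (S t) y)) + V y = 0)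
    {z : ℝ → Fin n → ℝ} (hz : ContDiff ℝ 1 z)
    (hzσ : ∀ t ∈ Set.Icc t₀ t₁, σ (z t) *ᵥ deriv z t = deriv z t) :
    (∫ t in t₀..t₁, (m / 2 * (deriv z t ⬝ᵥ deriv z t) - V (z t))) - S t₁ (z t₁)
      = (∫ t in t₀..t₁, m / 2 *
          ((deriv z t - m⁻¹ • σ (z t) *ᵥ grad (S t) (z t)) ⬝ᵥ
            (deriv z t - m⁻¹ • σ (z t) *ᵥ grad (S t) (z t)))) - S t₀ (z t₀) := by
  set φ := fun τ => S τ (z τ)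
  have hφ : ContDiff ℝ 1 φ := hS.comp (contDiff_id.prodMk hz)
  have hφ' : Continuous (deriv φ) := hφ.continuous_deriv le_rfl
  have hL : Continuous fun t => m / 2 * (deriv z t ⬝ᵥ deriv z t) - V (z t) := by
    have hz' := hz.continuous_deriv le_rfl
    fun_prop
  have hpointwise : ∀ t ∈ Set.Icc t₀ t₁,
      m / 2 * (deriv z t ⬝ᵥ deriv z t) - V (z t) - deriv φ t
        = m / 2 * ((deriv z t - m⁻¹ • σ (z t) *ᵥ grad (S t) (z t)) ⬝ᵥ
            (deriv z t - m⁻¹ • σ (z t) *ᵥ grad (S t) (z t))) := by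
    intro t ht
    rw [(hasDerivAt_comp_curve (hS.differentiable one_ne_zero _)
        (hz.differentiable one_ne_zero t)).deriv,
      ← (hσsymm _).complete_square (hσidem _) hm _ (hzσ t ht)]
    linarith [hGHJ t ht (z t)]
  calc (∫ t in t₀..t₁, (m / 2 * (deriv z t ⬝ᵥ deriv z t) - V (z t))) - φ t₁
      = (∫ t in t₀..t₁, (m / 2 * (deriv z t ⬝ᵥ deriv z t) - V (z t)))
          - (∫ t in t₀..t₁, deriv φ t) - φ t₀ := by
        rw [intervalIntegral.integral_deriv_eq_sub
          (fun t _ => hφ.differentiable one_ne_zero t) (hφ'.intervalIntegrable t₀ t₁)]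
        ring
    _ = (∫ t in t₀..t₁, (m / 2 * (deriv z t ⬝ᵥ deriv z t) - V (z t) - deriv φ t)) - φ t₀ := by
        rw [intervalIntegral.integral_sub (hL.intervalIntegrable t₀ t₁)
          (hφ'.intervalIntegrable t₀ t₁)]
    _ = _ := by
        rw [intervalIntegral.integral_congr (by rwa [Set.uIcc_of_le ht])]

end HamiltonJacobi

theorem stmt_17_general {n k : ℕ} (t₀ t₁ : ℝ) (ht : t₀ ≤ t₁) (m : ℝ) (hm : 0 < m)
    (V : (Fin n → ℝ) → ℝ) (hV : ContDiff ℝ 1 V)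
    (S₁ : (Fin n → ℝ) → ℝ)
    (Ω : (Fin n → ℝ) → Matrix (Fin k) (Fin n) ℝ)
    (hΩrank : ∀ y, LinearIndependent ℝ (fun i : Fin k => Ω y i))
    (σ : (Fin n → ℝ) → Matrix (Fin n) (Fin n) ℝ)
    (hσ : ∀ y, σ y = 1 - (Ω y)ᵀ * (Ω y * (Ω y)ᵀ)⁻¹ * Ω y)
    (S : ℝ → (Fin n → ℝ) → ℝ)
    (hS : ContDiff ℝ 1 (fun p : ℝ × (Fin n → ℝ) => S p.1 p.2))
    (hGHJ : ∀ t ∈ Set.Icc t₀ t₁, ∀ y : Fin n → ℝ,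
      deriv (fun τ => S τ y) t
        + (1 / (2 * m)) * (grad (S t) y ⬝ᵥ (σ y).mulVec (grad (S t) y)) + V y = 0)
    (hterm : ∀ y : Fin n → ℝ, S t₁ y = S₁ y)
    (x₀ : Fin n → ℝ)
    (xs : ℝ → Fin n → ℝ) (hxs : ContDiff ℝ 1 xs) (hxs0 : xs t₀ = x₀)
    (hflow : ∀ t ∈ Set.Icc t₀ t₁,
      deriv xs t = m⁻¹ • (σ (xs t)).mulVec (grad (S t) (xs t))) :
    ∀ x : ℝ → Fin n → ℝ, ContDiff ℝ 1 x → x t₀ = x₀ →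
      (∀ t ∈ Set.Icc t₀ t₁, (Ω (x t)).mulVec (deriv x t) = 0) →
      (∫ t in t₀..t₁, ((m / 2) * (deriv xs t ⬝ᵥ deriv xs t) - V (xs t)))
          - S₁ (xs t₁)
        ≤ (∫ t in t₀..t₁, ((m / 2) * (deriv x t ⬝ᵥ deriv x t) - V (x t)))
          - S₁ (x t₁) := by
  intro x hx hx0 hΩx
  have hσΩ : ∀ y, σ y = kerProj (Ω y) := hσ
  have hσidem : ∀ y, IsIdempotentElem (σ y) := fun y => by
    rw [hσΩ]; exact isIdempotentElem_kerProj (isUnit_mul_transpose_self (hΩrank y))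
  have hσsymm : ∀ y, (σ y).IsSymm := fun y => by rw [hσΩ]; exact isSymm_kerProj _
  have hxs_eq := action_sub_eq_integral_sq_sub ht hm.ne' hV.continuous hσsymm hσidem hS hGHJ hxs
    fun t ht => by rw [hflow t ht, mulVec_smul, mulVec_mulVec, (hσidem _).eq]
  have hx_eq := action_sub_eq_integral_sq_sub ht hm.ne' hV.continuous hσsymm hσidem hS hGHJ hx
    fun t ht => by rw [hσΩ]; exact kerProj_mulVec_of_mulVec_eq_zero _ (hΩx t ht)
  have hxs_zero : (∫ t in t₀..t₁, m / 2 *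
      ((deriv xs t - m⁻¹ • σ (xs t) *ᵥ grad (S t) (xs t)) ⬝ᵥ
        (deriv xs t - m⁻¹ • σ (xs t) *ᵥ grad (S t) (xs t)))) = 0 := by
    rw [intervalIntegral.integral_congr (g := fun _ => 0), intervalIntegral.integral_zero]
    intro t ht'
    rw [Set.uIcc_of_le ht] at ht'
    simp [hflow t ht']
  have hx_nonneg : 0 ≤ ∫ t in t₀..t₁, m / 2 *
      ((deriv x t - m⁻¹ • σ (x t) *ᵥ grad (S t) (x t)) ⬝ᵥ
        (deriv x t - m⁻¹ • σ (x t) *ᵥ grad (S t) (x t))) :=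
    intervalIntegral.integral_nonneg ht fun t _ =>
      mul_nonneg (by positivity) (dotProduct_self_star_nonneg _)
  rw [hterm, hxs0] at hxs_eq
  rw [hterm, hx0] at hx_eq
  linarith

theorem stmt_17 {n k : ℕ} (t₀ t₁ : ℝ) (ht : t₀ ≤ t₁) (m : ℝ) (hm : 0 < m)
    (V : (Fin n → ℝ) → ℝ) (hV : ContDiff ℝ 1 V)
    (S₁ : (Fin n → ℝ) → ℝ) (hS₁ : Continuous S₁)
    (Ω : (Fin n → ℝ) → Matrix (Fin k) (Fin n) ℝ)
    (hΩcont : ∀ i j, Continuous (fun y => Ω y i j))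
    (hΩrank : ∀ y, LinearIndependent ℝ (fun i : Fin k => Ω y i))
    (σ : (Fin n → ℝ) → Matrix (Fin n) (Fin n) ℝ)
    (hσ : ∀ y, σ y = 1 - (Ω y)ᵀ * (Ω y * (Ω y)ᵀ)⁻¹ * Ω y)
    (S : ℝ → (Fin n → ℝ) → ℝ)
    (hS : ContDiff ℝ 1 (fun p : ℝ × (Fin n → ℝ) => S p.1 p.2))
    (hGHJ : ∀ t ∈ Set.Icc t₀ t₁, ∀ y : Fin n → ℝ,
      deriv (fun τ => S τ y) t
        + (1 / (2 * m)) * (grad (S t) y ⬝ᵥ (σ y).mulVec (grad (S t) y)) + V y = 0)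
    (hterm : ∀ y : Fin n → ℝ, S t₁ y = S₁ y)
    (x₀ : Fin n → ℝ)
    (xs : ℝ → Fin n → ℝ) (hxs : ContDiff ℝ 1 xs) (hxs0 : xs t₀ = x₀)
    (hflow : ∀ t ∈ Set.Icc t₀ t₁,
      deriv xs t = m⁻¹ • (σ (xs t)).mulVec (grad (S t) (xs t))) :
    ∀ x : ℝ → Fin n → ℝ, ContDiff ℝ 1 x → x t₀ = x₀ →
      (∀ t ∈ Set.Icc t₀ t₁, (Ω (x t)).mulVec (deriv x t) = 0) →
      (∫ t in t₀..t₁, ((m / 2) * (deriv xs t ⬝ᵥ deriv xs t) - V (xs t)))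
          - S₁ (xs t₁)
        ≤ (∫ t in t₀..t₁, ((m / 2) * (deriv x t ⬝ᵥ deriv x t) - V (x t)))
          - S₁ (x t₁) :=
  stmt_17_general t₀ t₁ ht m hm V hV S₁ Ω hΩrank σ hσ S hS hGHJ hterm x₀ xs hxs hxs0 hflow
end
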